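/- If S ≥ s̲ almost surely for some s̲ ∈ (0, 1] and P(Z̄ ≥ s̲/2) > 0, then for every t > 0, P(|Ĉ − C̄| ≥ t | Z̄ ≥ s̲/2) ≤ 2·exp(−n·s̲²·t²/2). -/

import Mathlib

open MeasureTheory ProbabilityTheory Finset unitInterval Real
open scoped ENNReal

/-!
Given a cell `{S = s, C = c}`, the offers are i.i.d. Bernoulli(`s`) with `s ≥ s̲`. On
`{Z̄ ≥ s̲/2}` at least `n s̲/2` units are offered, and `Ĉ − C̄` times the number of offers is
`∑ j (c_j − C̄)(Z_j − s)`, a weighted sum of centred Bernoulli variables with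
`∑ j (c_j − C̄)² ≤ n/4`. Hoeffding's inequality therefore bounds `P(Z̄ ≥ s̲/2, |Ĉ − C̄| ≥ t)` by
`2 exp(−2 n s̲² t²) = 2x⁴`, where `x = exp(−n s̲² t²/2)`, and `P(Z̄ < s̲/2)` by
`exp(−n s̲²/2) ≤ x` when `t ≤ 1`. Averaging over the cells, the conditional probability is at
most `2x⁴/(1 − x) ≤ 2x` when `2x < 1`. For `t > 1` the event is empty, as `Ĉ, C̄ ∈ [0, 1]`.
-/

section BernoulliProduct

variable {ι : Type*} [Fintype ι] (p : I)

lemma hasSubgaussianMGF_bernoulli_sub :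
    HasSubgaussianMGF (fun b : Bool ↦ (if b then 1 else 0) - (p : ℝ)) (1 / 4)
      Ber(true, false, p) := by
  have h := hasSubgaussianMGF_of_mem_Icc (μ := Ber(true, false, p))
    (X := fun b : Bool ↦ if b then (1 : ℝ) else 0) (a := 0) (b := 1) (by fun_prop)
    (ae_of_all _ fun b ↦ by cases b <;> simp)
  convert h using 2
  · simp [integral_bernoulliMeasure]
  · norm_num

lemma measureReal_pi_bernoulli_sum_ge_le (r : ι → ℝ) {a V : ℝ} (ha : 0 < a)
    (hV : ∑ j, r j ^ 2 ≤ V) :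
    (Measure.pi fun _ : ι ↦ Ber(true, false, p)).real
        {z | a ≤ ∑ j, r j * ((if z j then 1 else 0) - p)}
      ≤ exp (-2 * a ^ 2 / V) := by
  -- For `r = 0` the sub-Gaussian bound is the junk value `exp (-a ^ 2 / 0) = 1`.
  rcases (sum_nonneg fun j _ ↦ sq_nonneg (r j)).eq_or_lt with hr | hr
  · have hr0 : ∀ j, r j = 0 := fun j ↦
      (sq_eq_zero_iff.1 ((sum_eq_zero_iff_of_nonneg fun j _ ↦ sq_nonneg (r j)).1 hr.symm j
        (mem_univ j)))
    simp [hr0, not_le.2 ha, exp_nonneg]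
  have hX (j : ι) : HasSubgaussianMGF (fun z : ι → Bool ↦ (if z j then 1 else 0) - (p : ℝ))
      (1 / 4) (Measure.pi fun _ : ι ↦ Ber(true, false, p)) := by
    have h := measurePreserving_eval (fun _ : ι ↦ Ber(true, false, p)) j
    exact .of_map h.measurable.aemeasurable (h.map_eq ▸ hasSubgaussianMGF_bernoulli_sub p)
  have hindep : iIndepFun (fun j (z : ι → Bool) ↦ r j * ((if z j then 1 else 0) - p))
      (Measure.pi fun _ : ι ↦ Ber(true, false, p)) :=
    iIndepFun_pi (μ := fun _ : ι ↦ Ber(true, false, p))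
      (X := fun j (b : Bool) ↦ r j * ((if b then 1 else 0) - p)) fun j ↦ by fun_prop
  refine (HasSubgaussianMGF.measure_sum_ge_le_of_iIndepFun hindep
    (fun j _ ↦ (hX j).const_mul (r j)) ha.le).trans ?_
  rw [NNReal.coe_sum]
  change exp (-a ^ 2 / (2 * ∑ j, r j ^ 2 * (1 / 4))) ≤ _
  rw [exp_le_exp, ← sum_mul]
  have hS : 2 * ((∑ j, r j ^ 2) * (1 / 4)) = (∑ j, r j ^ 2) / 2 := by ring
  rw [hS, div_div_eq_mul_div, neg_mul, neg_div, neg_mul, neg_div, neg_le_neg_iff, mul_comm]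
  exact div_le_div_of_nonneg_left (by positivity) hr hV

end BernoulliProduct

section Conditioning

variable {Ω α : Type*} [MeasurableSpace Ω] {μ : Measure Ω}

lemma map_cond_eq_pi_bernoulli {ι : Type*} [Fintype ι] [IsFiniteMeasure μ] {P : Set Ω}
    (hP : μ P ≠ 0) {Z : Ω → ι → Bool} (hZ : Measurable Z) (p : I)
    (hlaw : ∀ z, (μ[{ω | Z ω = z} | P]).toReal = ∏ j, if z j then (p : ℝ) else 1 - p) :
    (μ[|P]).map Z = Measure.pi fun _ : ι ↦ Ber(true, false, p) := by
  have := cond_isProbabilityMeasure hP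
  refine Measure.ext_iff_singleton.2 fun z ↦ ?_
  have hBer (b : Bool) :
      Ber(true, false, p) {b} = ENNReal.ofReal (if b then (p : ℝ) else 1 - p) := by
    rw [← ofReal_measureReal]
    cases b <;> simp
  rw [Measure.map_apply hZ (measurableSet_singleton z), Measure.pi_singleton]
  simp only [hBer]
  rw [← ENNReal.ofReal_prod_of_nonneg fun j _ ↦ by split_ifs <;> simp [p.2.1, p.2.2],
    ← hlaw z, ENNReal.ofReal_toReal (measure_ne_top _ _)]
  rfl

lemma cond_eq_of_map_eq [IsFiniteMeasure μ] {β γ : Type*} [MeasurableSpace γ]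
    [DiscreteMeasurableSpace γ] {P : Set Ω} (hP : MeasurableSet P) {C : Ω → β} {Z : Ω → γ}
    (hZ : Measurable Z) {c : β} (hC : ∀ ω ∈ P, C ω = c) {ν : Measure γ}
    (hlaw : (μ[|P]).map Z = ν) (q : β → γ → Prop) :
    μ[{ω | q (C ω) (Z ω)} | P] = ν {z | q c z} := by
  have hset : P ∩ {ω | q (C ω) (Z ω)} = P ∩ Z ⁻¹' {z | q c z} := by
    ext ω
    simp +contextual [hC]
  rw [← cond_inter_self hP, hset, cond_inter_self hP, ← hlaw,
    Measure.map_apply hZ .of_discrete]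

lemma le_of_ae_le_of_measure_ne_zero {f : Ω → ℝ} {a b : ℝ} (hf : ∀ᵐ ω ∂μ, a ≤ f ω) {E : Set Ω}
    (hE : μ E ≠ 0) (hfE : ∀ ω ∈ E, f ω = b) : a ≤ b := by
  obtain ⟨ω, hω, ha⟩ := Measure.exists_mem_of_measure_ne_zero_of_ae hE (ae_restrict_of_ae hf)
  exact hfE ω hω ▸ ha

lemma cond_le_ofReal_div {A B : Set Ω} (hA : MeasurableSet A) {a b : ℝ}
    (hAB : μ (A ∩ B) ≤ ENNReal.ofReal b) (ha : 0 < a) (hAa : ENNReal.ofReal a ≤ μ A) :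
    μ[B | A] ≤ ENNReal.ofReal (b / a) := by
  rw [cond_apply hA, div_eq_inv_mul, ENNReal.ofReal_mul (inv_nonneg.2 ha.le),
    ENNReal.ofReal_inv_of_pos ha]
  gcongr

variable [Fintype α] [MeasurableSpace α] [DiscreteMeasurableSpace α] [IsProbabilityMeasure μ]
  {X : Ω → α}

lemma measure_eq_sum_mul_cond_fiber (hX : Measurable X) (E : Set Ω) :
    μ E = ∑ x, μ (X ⁻¹' {x}) * μ[E | X ← x] := by
  conv_lhs => rw [← sum_meas_smul_cond_fiber hX μ]
  simp

lemma sum_measure_fiber_eq_one (hX : Measurable X) : ∑ x, μ (X ⁻¹' {x}) = 1 := by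
  rw [sum_measure_preimage_singleton _ fun _ _ ↦ hX (measurableSet_singleton _)]
  simp

lemma measure_le_of_forall_cond_fiber_le (hX : Measurable X) {E : Set Ω} {b : ℝ≥0∞}
    (h : ∀ x, μ (X ⁻¹' {x}) ≠ 0 → μ[E | X ← x] ≤ b) : μ E ≤ b := by
  calc μ E = ∑ x, μ (X ⁻¹' {x}) * μ[E | X ← x] := measure_eq_sum_mul_cond_fiber hX E
    _ ≤ ∑ x, μ (X ⁻¹' {x}) * b := by
      refine sum_le_sum fun x _ ↦ ?_
      by_cases hx : μ (X ⁻¹' {x}) = 0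
      · simp [hx]
      · gcongr
        exact h x hx
    _ = b := by rw [← sum_mul, sum_measure_fiber_eq_one hX, one_mul]

lemma le_measure_of_forall_le_cond_fiber (hX : Measurable X) {E : Set Ω} {b : ℝ≥0∞}
    (h : ∀ x, μ (X ⁻¹' {x}) ≠ 0 → b ≤ μ[E | X ← x]) : b ≤ μ E := by
  calc b = ∑ x, μ (X ⁻¹' {x}) * b := by rw [← sum_mul, sum_measure_fiber_eq_one hX, one_mul]
    _ ≤ ∑ x, μ (X ⁻¹' {x}) * μ[E | X ← x] := by
      refine sum_le_sum fun x _ ↦ ?_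
      by_cases hx : μ (X ⁻¹' {x}) = 0
      · simp [hx]
      · gcongr
        exact h x hx
    _ = μ E := (measure_eq_sum_mul_cond_fiber hX E).symm

end Conditioning

section Estimator

variable {n : ℕ}

noncomputable def boolMean (z : Fin n → Bool) : ℝ := (∑ j, if z j then (1 : ℝ) else 0) / n

noncomputable def complierShareEst (c z : Fin n → Bool) : ℝ :=
  if 0 < (∑ j, if z j then (1 : ℕ) else 0) then
    (∑ j, if c j && z j then (1 : ℝ) else 0) / (∑ j, if z j then (1 : ℝ) else 0)
  else 0

lemma sum_ite_one_zero_le (z : Fin n → Bool) : ∑ j, (if z j then (1 : ℝ) else 0) ≤ n :=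
  (sum_le_sum (g := fun _ ↦ 1) fun j _ ↦ by split_ifs <;> norm_num).trans (by simp)

lemma sum_ite_one_zero_eq_mul_boolMean (z : Fin n → Bool) :
    ∑ j, (if z j then (1 : ℝ) else 0) = n * boolMean z := by
  rcases n.eq_zero_or_pos with rfl | hn
  · simp
  · rw [boolMean, mul_div_cancel₀ _ (by positivity)]

lemma boolMean_mem_Icc (z : Fin n → Bool) : boolMean z ∈ Set.Icc (0 : ℝ) 1 :=
  ⟨div_nonneg (sum_nonneg fun j _ ↦ by split_ifs <;> norm_num) n.cast_nonneg,
    div_le_one_of_le₀ (sum_ite_one_zero_le z) n.cast_nonneg⟩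

lemma complierShareEst_mem_Icc (c z : Fin n → Bool) :
    complierShareEst c z ∈ Set.Icc (0 : ℝ) 1 := by
  have hNz : 0 ≤ ∑ j, if z j then (1 : ℝ) else 0 := sum_nonneg fun j _ ↦ by split_ifs <;> norm_num
  unfold complierShareEst
  split_ifs
  · refine ⟨div_nonneg (sum_nonneg fun j _ ↦ by split_ifs <;> norm_num) hNz,
      div_le_one_of_le₀ (sum_le_sum fun j _ ↦ ?_) hNz⟩
    cases c j <;> cases z j <;> norm_num
  · simp

lemma sum_sub_boolMean_mul_eq (c z : Fin n → Bool) (s : ℝ) :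
    ∑ j, ((if c j then 1 else 0) - boolMean c) * ((if z j then 1 else 0) - s)
      = (∑ j, if c j && z j then (1 : ℝ) else 0)
        - boolMean c * ∑ j, if z j then (1 : ℝ) else 0 := by
  have hc : ∑ j, ((if c j then 1 else 0) - boolMean c) = 0 := by
    rw [sum_sub_distrib, sum_ite_one_zero_eq_mul_boolMean]
    simp
  have hj (j : Fin n) : ((if c j then 1 else 0) - boolMean c) * ((if z j then 1 else 0) - s)
      = (if c j && z j then 1 else 0) - boolMean c * (if z j then 1 else 0)
        - s * ((if c j then 1 else 0) - boolMean c) := by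
    cases c j <;> cases z j <;> simp <;> ring
  simp only [hj, sum_sub_distrib, ← mul_sum, hc, mul_zero, sub_zero]

lemma sum_sub_boolMean_sq_le (c : Fin n → Bool) :
    ∑ j, ((if c j then 1 else 0) - boolMean c) ^ 2 ≤ (n : ℝ) / 4 := by
  have h := sum_sub_boolMean_mul_eq c c (boolMean c)
  simp only [Bool.and_self, sum_ite_one_zero_eq_mul_boolMean] at h
  simp only [sq, h]
  nlinarith [sq_nonneg (1 - 2 * boolMean c), n.cast_nonneg (α := ℝ)]

lemma abs_complierShareEst_sub_boolMean_le_one (c z : Fin n → Bool) :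
    |complierShareEst c z - boolMean c| ≤ 1 :=
  abs_sub_le_of_nonneg_of_le (complierShareEst_mem_Icc c z).1 (complierShareEst_mem_Icc c z).2
    (boolMean_mem_Icc c).1 (boolMean_mem_Icc c).2

variable (p : I)

lemma measureReal_pi_bernoulli_complierShareEst_dev_le (hn : 0 < n) {slb t : ℝ}
    (hslb : 0 < slb) (ht : 0 < t) (c : Fin n → Bool) :
    (Measure.pi fun _ : Fin n ↦ Ber(true, false, p)).real
        {z | slb / 2 ≤ boolMean z ∧ t ≤ |complierShareEst c z - boolMean c|}
      ≤ 2 * exp (-(2 * n * slb ^ 2 * t ^ 2)) := by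
  set r : Fin n → ℝ := fun j ↦ (if c j then 1 else 0) - boolMean c
  set a := t * (n * slb / 2)
  have hn' : (0 : ℝ) < n := by exact_mod_cast hn
  have ha : 0 < a := by positivity
  have hsub : {z | slb / 2 ≤ boolMean z ∧ t ≤ |complierShareEst c z - boolMean c|}
      ⊆ {z | a ≤ ∑ j, r j * ((if z j then 1 else 0) - p)}
        ∪ {z | a ≤ ∑ j, -r j * ((if z j then 1 else 0) - p)} := by
    rintro z ⟨hA, hB⟩
    set N := ∑ j, if z j then (1 : ℝ) else 0
    have hN : n * slb / 2 ≤ N := by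
      rw [boolMean, le_div_iff₀ hn'] at hA
      linarith
    have hNpos : 0 < N := lt_of_lt_of_le (by positivity) hN
    have hest : complierShareEst c z = (∑ j, if c j && z j then (1 : ℝ) else 0) / N := by
      refine if_pos ?_
      exact_mod_cast
        (show (0 : ℝ) < ((∑ j, if z j then 1 else 0 : ℕ) : ℝ) by push_cast; exact hNpos)
    have hdev : a ≤ |∑ j, r j * ((if z j then 1 else 0) - p)| := by
      rw [sum_sub_boolMean_mul_eq, ← div_mul_cancel₀ (∑ j, if c j && z j then (1 : ℝ) else 0)
        hNpos.ne', ← sub_mul, ← hest, abs_mul, abs_of_pos hNpos]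
      exact mul_le_mul hB hN (by positivity) (abs_nonneg _)
    simp only [neg_mul, sum_neg_distrib]
    exact le_abs.1 hdev
  have hr : ∑ j, r j ^ 2 ≤ n / 4 := sum_sub_boolMean_sq_le c
  calc _ ≤ _ := measureReal_mono hsub
    _ ≤ _ := measureReal_union_le _ _
    _ ≤ exp (-2 * a ^ 2 / (n / 4)) + exp (-2 * a ^ 2 / (n / 4)) :=
      add_le_add (measureReal_pi_bernoulli_sum_ge_le p r ha hr)
        (measureReal_pi_bernoulli_sum_ge_le p (fun j ↦ -r j) ha (by simpa using hr))
    _ = 2 * exp (-(2 * n * slb ^ 2 * t ^ 2)) := by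
      rw [← two_mul]
      congr 2
      field_simp
      ring

lemma one_sub_exp_le_measureReal_pi_bernoulli_boolMean (hn : 0 < n) {slb : ℝ}
    (hslb : 0 < slb) (hp : slb ≤ p) :
    1 - exp (-(n * slb ^ 2 / 2))
      ≤ (Measure.pi fun _ : Fin n ↦ Ber(true, false, p)).real {z | slb / 2 ≤ boolMean z} := by
  have hn' : (0 : ℝ) < n := by exact_mod_cast hn
  have hsub : {z | slb / 2 ≤ boolMean z}ᶜ
      ⊆ {z : Fin n → Bool | n * slb / 2 ≤ ∑ j, (-1 : ℝ) * ((if z j then 1 else 0) - p)} := by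
    intro z hz
    simp only [Set.mem_compl_iff, Set.mem_ofPred_eq, not_le, boolMean, div_lt_iff₀ hn'] at hz
    simp only [Set.mem_ofPred_eq, neg_one_mul, neg_sub, sum_sub_distrib, sum_const, card_univ,
      Fintype.card_fin, nsmul_eq_mul]
    nlinarith [mul_le_mul_of_nonneg_left hp hn'.le]
  have htail := (measureReal_mono hsub).trans
    (measureReal_pi_bernoulli_sum_ge_le p (fun _ ↦ -1) (by positivity) (V := n) (by simp))
  rw [measureReal_compl .of_discrete, probReal_univ] at htail
  have hexp : -2 * (n * slb / 2) ^ 2 / n = -(n * slb ^ 2 / 2) := by field_simp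
  rw [hexp] at htail
  linarith

end Estimator

section Cells

variable {Ω : Type*} [MeasurableSpace Ω] {μ : Measure Ω} [IsProbabilityMeasure μ] {n : ℕ}
  {𝒮 : Finset ℝ} {S : Ω → ℝ} {C Z : Ω → Fin n → Bool}

def IsBernoulliDesign (μ : Measure Ω) (𝒮 : Finset ℝ) (S : Ω → ℝ) (C Z : Ω → Fin n → Bool) :
    Prop :=
  ∀ s ∈ 𝒮, ∀ c : Fin n → Bool, 0 < μ {ω | S ω = s ∧ C ω = c} →
    ∀ z : Fin n → Bool, (μ[{ω | Z ω = z} | {ω | S ω = s ∧ C ω = c}]).toReal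
      = ∏ j, (if z j then s else 1 - s)

lemma cond_fiber_setOf_eq (h𝒮 : ∀ s ∈ 𝒮, s ∈ Set.Icc (0 : ℝ) 1) (hSval : ∀ ω, S ω ∈ 𝒮)
    (hS : Measurable S) (hC : Measurable C) (hZ : Measurable Z)
    (hBern : IsBernoulliDesign μ 𝒮 S C Z) (y : 𝒮 × (Fin n → Bool))
    (hy : μ ((fun ω ↦ ((⟨S ω, hSval ω⟩ : 𝒮), C ω)) ⁻¹' {y}) ≠ 0)
    (q : (Fin n → Bool) → (Fin n → Bool) → Prop) :
    μ[{ω | q (C ω) (Z ω)} | (fun ω ↦ ((⟨S ω, hSval ω⟩ : 𝒮), C ω)) ⁻¹' {y}]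
      = ENNReal.ofReal
        ((Measure.pi fun _ : Fin n ↦ Ber(true, false, ⟨y.1, h𝒮 _ y.1.2⟩)).real {z | q y.2 z}) := by
  have hcell : (fun ω ↦ ((⟨S ω, hSval ω⟩ : 𝒮), C ω)) ⁻¹' {y} = {ω | S ω = y.1 ∧ C ω = y.2} := by
    ext ω
    simp [Prod.ext_iff, Subtype.ext_iff]
  have hlaw := map_cond_eq_pi_bernoulli hy hZ ⟨y.1, h𝒮 _ y.1.2⟩
    (hcell ▸ hBern y.1 y.1.2 y.2 (pos_iff_ne_zero.2 (hcell ▸ hy)))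
  rw [cond_eq_of_map_eq (hS.subtype_mk.prodMk hC (measurableSet_singleton y)) hZ
    (fun ω hω ↦ congrArg Prod.snd hω) hlaw q, ofReal_measureReal]

lemma measure_complierShareEst_dev_le (h𝒮 : ∀ s ∈ 𝒮, s ∈ Set.Icc (0 : ℝ) 1)
    (hSval : ∀ ω, S ω ∈ 𝒮) (hS : Measurable S) (hC : Measurable C) (hZ : Measurable Z)
    (hBern : IsBernoulliDesign μ 𝒮 S C Z) (hn : 0 < n) {slb t : ℝ} (hslb : 0 < slb)
    (ht : 0 < t) :
    μ {ω | slb / 2 ≤ boolMean (Z ω) ∧ t ≤ |complierShareEst (C ω) (Z ω) - boolMean (C ω)|}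
      ≤ ENNReal.ofReal (2 * exp (-(2 * n * slb ^ 2 * t ^ 2))) := by
  refine measure_le_of_forall_cond_fiber_le
    (X := fun ω ↦ ((⟨S ω, hSval ω⟩ : 𝒮), C ω)) (hS.subtype_mk.prodMk hC) fun y hy ↦ ?_
  rw [cond_fiber_setOf_eq h𝒮 hSval hS hC hZ hBern y hy
    fun c z ↦ slb / 2 ≤ boolMean z ∧ t ≤ |complierShareEst c z - boolMean c|]
  exact ENNReal.ofReal_le_ofReal (measureReal_pi_bernoulli_complierShareEst_dev_le _ hn hslb ht _)

lemma one_sub_exp_le_measure_boolMean (h𝒮 : ∀ s ∈ 𝒮, s ∈ Set.Icc (0 : ℝ) 1)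
    (hSval : ∀ ω, S ω ∈ 𝒮) (hS : Measurable S) (hC : Measurable C) (hZ : Measurable Z)
    (hBern : IsBernoulliDesign μ 𝒮 S C Z) (hn : 0 < n) {slb : ℝ} (hslb : 0 < slb)
    (hSlb : ∀ᵐ ω ∂μ, slb ≤ S ω) :
    ENNReal.ofReal (1 - exp (-(n * slb ^ 2 / 2))) ≤ μ {ω | slb / 2 ≤ boolMean (Z ω)} := by
  refine le_measure_of_forall_le_cond_fiber
    (X := fun ω ↦ ((⟨S ω, hSval ω⟩ : 𝒮), C ω)) (hS.subtype_mk.prodMk hC) fun y hy ↦ ?_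
  rw [cond_fiber_setOf_eq h𝒮 hSval hS hC hZ hBern y hy fun _ z ↦ slb / 2 ≤ boolMean z]
  exact ENNReal.ofReal_le_ofReal (one_sub_exp_le_measureReal_pi_bernoulli_boolMean _ hn hslb
    (le_of_ae_le_of_measure_ne_zero hSlb hy fun ω hω ↦ congrArg (·.1.1) hω))

end Cells

lemma two_mul_pow_four_div_one_sub_le {x : ℝ} (hx0 : 0 ≤ x) (hx : 2 * x < 1) :
    2 * x ^ 4 / (1 - x) ≤ 2 * x := by
  rw [div_le_iff₀ (by linarith)]
  nlinarith [mul_nonneg hx0 hx0, mul_nonneg (mul_nonneg hx0 hx0) hx0]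

theorem stmt16_general {Ω : Type*} [MeasurableSpace Ω] (μ : Measure Ω) [IsProbabilityMeasure μ]
    (n : ℕ) (hn : 2 ≤ n) (𝒮 : Finset ℝ) (h𝒮 : ∀ s ∈ 𝒮, s ∈ Set.Icc (0 : ℝ) 1)
    (S : Ω → ℝ) (hSmeas : Measurable S) (hSval : ∀ ω, S ω ∈ 𝒮)
    (C Z : Ω → Fin n → Bool) (hCmeas : Measurable C) (hZmeas : Measurable Z)
    (hBern : ∀ s ∈ 𝒮, ∀ c : Fin n → Bool,
      0 < μ {ω | S ω = s ∧ C ω = c} →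
      ∀ z : Fin n → Bool,
        (μ[|{ω | S ω = s ∧ C ω = c}] {ω | Z ω = z}).toReal
          = ∏ j, (if z j then s else 1 - s))
    (slb : ℝ) (hslb0 : 0 < slb)
    (hSlb : ∀ᵐ ω ∂μ, slb ≤ S ω)
    (Zbar Cbar Chat : Ω → ℝ)
    (hZbar : Zbar = fun ω => (∑ j, if Z ω j then (1 : ℝ) else 0) / (n : ℝ))
    (hCbar : Cbar = fun ω => (∑ j, if C ω j then (1 : ℝ) else 0) / (n : ℝ))
    (hChat : Chat = fun ω =>
      if 0 < (∑ j, if Z ω j then (1 : ℕ) else 0) then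
        (∑ j, if C ω j && Z ω j then (1 : ℝ) else 0)
          / (∑ j, if Z ω j then (1 : ℝ) else 0)
      else 0) :
    ∀ t : ℝ, 0 < t →
      μ[|{ω | slb / 2 ≤ Zbar ω}] {ω | t ≤ |Chat ω - Cbar ω|}
        ≤ ENNReal.ofReal (2 * Real.exp (-((n : ℝ) * slb ^ 2 * t ^ 2) / 2)) := by
  intro t ht
  subst hZbar hCbar hChat
  change μ[{ω | t ≤ |complierShareEst (C ω) (Z ω) - boolMean (C ω)|}
    | {ω | slb / 2 ≤ boolMean (Z ω)}] ≤ _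
  have hn0 : 0 < n := by omega
  rcases lt_or_ge 1 t with ht1 | ht1
  · have hB : {ω | t ≤ |complierShareEst (C ω) (Z ω) - boolMean (C ω)|} = ∅ :=
      Set.eq_empty_of_forall_notMem fun ω hω ↦
        (hω.trans (abs_complierShareEst_sub_boolMean_le_one _ _)).not_gt ht1
    simp [hB]
  set x := exp (-((n : ℝ) * slb ^ 2 * t ^ 2) / 2)
  rcases le_or_gt 1 (2 * x) with hx1 | hx1
  · exact prob_le_one.trans (ENNReal.one_le_ofReal.2 hx1)
  have hAB := measure_complierShareEst_dev_le h𝒮 hSval hSmeas hCmeas hZmeas hBern hn0 hslb0 ht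
  have hx4 : exp (-(2 * n * slb ^ 2 * t ^ 2)) = x ^ 4 := by
    rw [← exp_nat_mul]
    ring_nf
  have hyx : exp (-(n * slb ^ 2 / 2)) ≤ x := exp_le_exp.2 <| by
    nlinarith [mul_le_mul_of_nonneg_left (pow_le_one₀ ht.le ht1 (n := 2))
      (by positivity : (0 : ℝ) ≤ n * slb ^ 2)]
  have hA := (ENNReal.ofReal_le_ofReal (show 1 - x ≤ _ from sub_le_sub_left hyx 1)).trans
    (one_sub_exp_le_measure_boolMean h𝒮 hSval hSmeas hCmeas hZmeas hBern hn0 hslb0 hSlb)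
  rw [hx4] at hAB
  exact (cond_le_ofReal_div (hZmeas (.of_discrete (s := {z | slb / 2 ≤ boolMean z}))) hAB
    (by linarith) hA).trans
      (ENNReal.ofReal_le_ofReal (two_mul_pow_four_div_one_sub_le (exp_pos _).le hx1))

/-- Hoeffding bound for the estimated complier share: conditionally on the offer rate
being at least `s̲/2`, `P(|Ĉ − C̄| ≥ t | Z̄ ≥ s̲/2) ≤ 2 exp(−n s̲² t²/2)`. -/
theorem stmt16 {Ω : Type*} [MeasurableSpace Ω] (μ : Measure Ω) [IsProbabilityMeasure μ]
    (n : ℕ) (hn : 2 ≤ n) (𝒮 : Finset ℝ) (h𝒮 : ∀ s ∈ 𝒮, s ∈ Set.Icc (0 : ℝ) 1)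
    (S : Ω → ℝ) (hSmeas : Measurable S) (hSval : ∀ ω, S ω ∈ 𝒮)
    (C Z : Ω → Fin n → Bool) (hCmeas : Measurable C) (hZmeas : Measurable Z)
    (hBern : ∀ s ∈ 𝒮, ∀ c : Fin n → Bool,
      0 < μ {ω | S ω = s ∧ C ω = c} →
      ∀ z : Fin n → Bool,
        (μ[|{ω | S ω = s ∧ C ω = c}] {ω | Z ω = z}).toReal
          = ∏ j, (if z j then s else 1 - s))
    (slb : ℝ) (hslb0 : 0 < slb) (hslb1 : slb ≤ 1)
    (hSlb : ∀ᵐ ω ∂μ, slb ≤ S ω)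
    (Zbar Cbar Chat : Ω → ℝ)
    (hZbar : Zbar = fun ω => (∑ j, if Z ω j then (1 : ℝ) else 0) / (n : ℝ))
    (hCbar : Cbar = fun ω => (∑ j, if C ω j then (1 : ℝ) else 0) / (n : ℝ))
    (hChat : Chat = fun ω =>
      if 0 < (∑ j, if Z ω j then (1 : ℕ) else 0) then
        (∑ j, if C ω j && Z ω j then (1 : ℝ) else 0)
          / (∑ j, if Z ω j then (1 : ℝ) else 0)
      else 0)
    (hpos : 0 < μ {ω | slb / 2 ≤ Zbar ω}) :
    ∀ t : ℝ, 0 < t →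
      μ[|{ω | slb / 2 ≤ Zbar ω}] {ω | t ≤ |Chat ω - Cbar ω|}
        ≤ ENNReal.ofReal (2 * Real.exp (-((n : ℝ) * slb ^ 2 * t ^ 2) / 2)) :=
  stmt16_general μ n hn 𝒮 h𝒮 S hSmeas hSval C Z hCmeas hZmeas hBern slb hslb0 hSlb Zbar Cbar Chat
    hZbar hCbar hChat
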